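/- arXiv:math/0608399 — 2 statements merged into one kernel-verified Lean document; each statement's English description precedes it below -/
import Mathlib

section
/- Let γ_0(s) = (sin(πs/β))^{−β/π} e^{is} for 0 < s < β, where 0 < β ≤ π. Then the Lagrangian angle of the associated equivariant Lagrangian surface L_0 in C^2 is θ_0(s) = (2 − π/β) s + π. In particular, the oscillation of θ_0 on (0, β) equals |2β − π|. -/
/-!
Writing `ω = π / β`, the profile is `r₀(s) = sin(ωs)^(-1/ω)`, so
`r₀' = -sin(ωs)^(-1/ω - 1) cos(ωs)` and `r₀' + i r₀ = sin(ωs)^(-1/ω - 1) · (-cos(ωs) + i sin(ωs))`: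
a positive multiple of `e^{i(π - ωs)}`. Hence `θ₀(s) = 2s + π - ωs` is affine, and the oscillation of
an affine map `s ↦ as + b` on an interval of length `ℓ` is its diameter `|a| ℓ`.
-/

open Real Set
open scoped Pointwise

theorem sSup_sub_sInf_image_affine_Ioo {a b c d : ℝ} (hcd : c < d) :
    sSup ((fun s => a * s + b) '' Ioo c d) - sInf ((fun s => a * s + b) '' Ioo c d)
      = |a| * (d - c) := by
  have himg : (fun s => a * s + b) '' Ioo c d = b +ᵥ a • Ioo c d := by
    rw [← image_smul, ← image_vadd, image_image]
    simp only [vadd_eq_add, smul_eq_mul, add_comm]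
  have hbdd : Bornology.IsBounded ((fun s => a * s + b) '' Ioo c d) := by
    rw [himg]
    exact ((Metric.isBounded_Ioo c d).smul₀ a).vadd b
  rw [← Real.diam_eq hbdd, himg, diam_vadd, diam_smul₀, Real.diam_Ioo hcd.le, Real.norm_eq_abs]

theorem hasDerivAt_sin_mul_rpow_neg_inv {ω s : ℝ} (hs : sin (ω * s) ≠ 0) :
    HasDerivAt (fun x => sin (ω * x) ^ (-ω⁻¹))
      (-(sin (ω * s) ^ (-ω⁻¹ - 1) * cos (ω * s))) s := by
  have hω : ω ≠ 0 := by
    rintro rfl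
    simp at hs
  have h := ((hasDerivAt_id s).const_mul ω).sin.rpow_const (p := -ω⁻¹) (Or.inl hs)
  simp only [id, mul_one] at h
  convert h using 1
  field_simp

theorem Complex.arg_neg_cos_add_sin_mul_I {t : ℝ} (h0 : 0 ≤ t) (h2π : t < 2 * π) :
    arg (-(Real.cos t : ℂ) + Real.sin t * I) = π - t := by
  rw [← ofReal_neg, ← Real.cos_pi_sub, ← Real.sin_pi_sub, ofReal_cos, ofReal_sin]
  exact arg_cos_add_sin_mul_I ⟨by linarith, by linarith⟩

theorem arg_deriv_add_mul_I_sin_mul_rpow_neg_inv {ω s : ℝ} (h0 : 0 < ω * s) (hπ : ω * s < π) :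
    Complex.arg (deriv (fun x => sin (ω * x) ^ (-ω⁻¹)) s
      + (sin (ω * s) ^ (-ω⁻¹) : ℝ) * Complex.I) = π - ω * s := by
  have hsin : 0 < sin (ω * s) := sin_pos_of_pos_of_lt_pi h0 hπ
  have hc : 0 < sin (ω * s) ^ (-ω⁻¹ - 1) := rpow_pos_of_pos hsin _
  have hr : sin (ω * s) ^ (-ω⁻¹) = sin (ω * s) ^ (-ω⁻¹ - 1) * sin (ω * s) := by
    rw [rpow_sub_one hsin.ne', div_mul_cancel₀ _ hsin.ne']
  rw [(hasDerivAt_sin_mul_rpow_neg_inv hsin.ne').deriv, hr]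
  generalize sin (ω * s) ^ (-ω⁻¹ - 1) = c at hc ⊢
  rw [show ((-(c * cos (ω * s)) : ℝ) : ℂ) + (c * sin (ω * s) : ℝ) * Complex.I
      = c * (-(cos (ω * s) : ℂ) + sin (ω * s) * Complex.I) by push_cast; ring,
    Complex.arg_real_mul _ hc, Complex.arg_neg_cos_add_sin_mul_I h0.le (by linarith [pi_pos])]

theorem stmt_3_general (β : ℝ) (hβ : 0 < β)
    (r : ℝ → ℝ) (hr : ∀ s, r s = Real.rpow (Real.sin (π * s / β)) (-(β / π)))
    (θ : ℝ → ℝ) (hθ : ∀ s, θ s = 2 * s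
      + Complex.arg (Complex.ofReal (deriv r s) + Complex.ofReal (r s) * Complex.I)) :
    (∀ s ∈ Ioo 0 β, θ s = (2 - π / β) * s + π)
    ∧ sSup (θ '' Ioo 0 β) - sInf (θ '' Ioo 0 β) = |2 * β - π| := by
  have hr' : r = fun x => sin (π / β * x) ^ (-(π / β)⁻¹) := by
    funext x
    rw [hr, inv_div, mul_div_right_comm]
    rfl
  have hθ_affine : ∀ s ∈ Ioo 0 β, θ s = (2 - π / β) * s + π := by
    rintro s ⟨hs0, hsβ⟩
    have h0 : 0 < π / β * s := by positivity
    have hπ : π / β * s < π := by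
      rw [div_mul_eq_mul_div, div_lt_iff₀ hβ]
      exact mul_lt_mul_of_pos_left hsβ pi_pos
    rw [hθ, hr', arg_deriv_add_mul_I_sin_mul_rpow_neg_inv h0 hπ]
    ring
  refine ⟨hθ_affine, ?_⟩
  have hslope : |2 - π / β| * (β - 0) = |2 * β - π| := by
    rw [sub_zero, ← abs_of_pos hβ, ← abs_mul, abs_of_pos hβ, sub_mul, div_mul_cancel₀ _ hβ.ne',
      mul_comm]
  rw [image_congr hθ_affine, sSup_sub_sInf_image_affine_Ioo hβ, hslope]

/-- for `γ₀(s) = (sin(πs/β))^{-β/π} e^{is}`, `0 < s < β ≤ π`, the Lagrangian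
angle `θ₀(s) = 2s + arg(r₀'(s) + i r₀(s))` of the associated equivariant Lagrangian
surface equals `(2 - π/β)s + π`; in particular its oscillation on `(0,β)` is `|2β - π|`. -/
theorem stmt_3 (β : ℝ) (hβ : 0 < β) (hβ' : β ≤ π)
    (r : ℝ → ℝ) (hr : ∀ s, r s = Real.rpow (Real.sin (π * s / β)) (-(β / π)))
    (θ : ℝ → ℝ) (hθ : ∀ s, θ s = 2 * s
      + Complex.arg (Complex.ofReal (deriv r s) + Complex.ofReal (r s) * Complex.I)) :
    (∀ s ∈ Ioo 0 β, θ s = (2 - π / β) * s + π)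
    ∧ sSup (θ '' Ioo 0 β) - sInf (θ '' Ioo 0 β) = |2 * β - π| :=
  stmt_3_general β hβ r hr θ hθ
end

section
/- Suppose r : [β/2, β/2 + ε₀] → (0, ∞) is C^1 and nondecreasing, and suppose a = r(β/2), and ε ∈ (0, arcsin(δ/a)) satisfies (r(β/2+ε) cos ε − a)^2 + (r(β/2+ε) sin ε)^2 = δ^2. Then (1/δ) ∫_{β/2}^{β/2+ε} √((r')^2 + r^2) ds ≤ (r(β/2+ε) − a)/δ + ε·r(β/2+ε)/δ ≤ 3/2 for all sufficiently small δ (depending only on a). -/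
open Real Set Filter Topology

lemma deriv_nonneg_aux {L U : ℝ} (hLU : L < U) {f f' : ℝ → ℝ}
    (hf : ∀ s ∈ Icc L U, HasDerivAt f (f' s) s)
    (hm : MonotoneOn f (Icc L U)) : ∀ s ∈ Icc L U, 0 ≤ f' s := by
  intro s hs
  rcases lt_or_eq_of_le hs.2 with h | h
  · have ht : Tendsto (slope f s) (𝓝[>] s) (𝓝 (f' s)) :=
      (hasDerivAt_iff_tendsto_slope.1 (hf s hs)).mono_left
        (nhdsWithin_mono s (fun y hy => ne_of_gt hy))
    refine ge_of_tendsto ht ?_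
    filter_upwards [Ioo_mem_nhdsGT_of_mem ⟨le_refl s, h⟩] with y hy
    rw [slope_def_field]
    apply div_nonneg
    · exact sub_nonneg.2 (hm hs ⟨hs.1.trans hy.1.le, hy.2.le⟩ hy.1.le)
    · linarith [hy.1]
  · have ht : Tendsto (slope f s) (𝓝[<] s) (𝓝 (f' s)) :=
      (hasDerivAt_iff_tendsto_slope.1 (hf s hs)).mono_left
        (nhdsWithin_mono s (fun y hy => ne_of_lt hy))
    refine ge_of_tendsto ht ?_
    filter_upwards [Ioo_mem_nhdsLT_of_mem (⟨h ▸ hLU, le_refl s⟩ : s ∈ Ioc L s)] with y hy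
    rw [slope_def_field]
    rw [div_nonneg_iff]
    refine Or.inr ⟨?_, by linarith [hy.2]⟩
    exact sub_nonpos.2 (hm ⟨hy.1.le, hy.2.le.trans hs.2⟩ hs hy.2.le)

lemma cauchy_aux {u y δ : ℝ} (hu : 0 ≤ u) (hy : 0 ≤ y) (hδ : 0 < δ)
    (h : u ^ 2 + y ^ 2 = δ ^ 2) : u + (100 / 99) * y ≤ (149 / 100) * δ := by
  have hsq : (u + (100 / 99) * y) ^ 2 ≤ ((149 / 100) * δ) ^ 2 := by
    nlinarith [sq_nonneg (u - y)]
  nlinarith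

lemma arith_aux {a δ ε R : ℝ} (ha : 0 < a) (hδ : 0 < δ) (hδ0 : δ < a / 100)
    (haR : a ≤ R) (hε : 0 < ε) (hεarc : ε < Real.arcsin (δ / a))
    (hconstr : (R * Real.cos ε - a) ^ 2 + (R * Real.sin ε) ^ 2 = δ ^ 2) :
    R - a + ε * R ≤ 3 / 2 * δ := by
  have hδa1 : δ / a < 1 / 100 := by rw [div_lt_iff₀ ha]; linarith
  have hδa0 : 0 < δ / a := by positivity
  have hδale : δ / a ≤ 1 := by linarith
  have hεpi2 : ε < π / 2 := lt_of_lt_of_le hεarc (Real.arcsin_le_pi_div_two _)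
  have hsinle : Real.sin ε ≤ δ / a := by
    have h1 : Real.sin ε < Real.sin (Real.arcsin (δ / a)) := by
      apply Real.strictMonoOn_sin ⟨by linarith [Real.pi_pos], hεpi2.le⟩
        ⟨Real.neg_pi_div_two_le_arcsin _, Real.arcsin_le_pi_div_two _⟩ hεarc
    rw [Real.sin_arcsin (by linarith) hδale] at h1
    exact h1.le
  have hsinpos : 0 < Real.sin ε :=
    Real.sin_pos_of_pos_of_lt_pi hε (by linarith [Real.pi_pos])
  have hcos0 : 0 ≤ Real.cos ε :=
    Real.cos_nonneg_of_mem_Icc ⟨by linarith [Real.pi_pos], hεpi2.le⟩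
  have hcos : 99 / 100 ≤ Real.cos ε := by
    have h1 := Real.sin_sq_add_cos_sq ε
    nlinarith [hsinle, hsinpos, hδa1]
  have hcospos : 0 < Real.cos ε := by linarith
  have hεtan : ε * Real.cos ε ≤ Real.sin ε := by
    have h1 := Real.lt_tan hε hεpi2
    rw [Real.tan_eq_sin_div_cos, lt_div_iff₀ hcospos] at h1
    exact h1.le
  have hR0 : 0 < R := lt_of_lt_of_le ha haR
  set x := R * Real.cos ε - a with hx
  set y := R * Real.sin ε with hy
  have hy0 : 0 ≤ y := le_of_lt (mul_pos hR0 hsinpos)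
  have hyδ : y ≤ δ := by nlinarith [sq_nonneg x]
  have h2 : ε * R ≤ y / Real.cos ε := by
    rw [le_div_iff₀ hcospos, hy]
    nlinarith [mul_le_mul_of_nonneg_right hεtan hR0.le]
  have h3 : R * (1 - Real.cos ε) ≤ y * Real.sin ε := by
    rw [hy]
    nlinarith [Real.sin_sq_add_cos_sq ε,
      mul_nonneg (mul_nonneg hR0.le hcos0) (sub_nonneg.2 (Real.cos_le_one ε))]
  have h4 : y * Real.sin ε ≤ δ * (1 / 100) :=
    mul_le_mul hyδ (le_trans hsinle hδa1.le) hsinpos.le hδ.le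
  have h5 : y / Real.cos ε ≤ (100 / 99) * y := by
    rw [div_le_iff₀ hcospos]
    nlinarith [mul_le_mul_of_nonneg_left hcos hy0]
  have h6 : |x| + (100 / 99) * y ≤ (149 / 100) * δ := by
    apply cauchy_aux (abs_nonneg x) hy0 hδ
    rw [sq_abs]; exact hconstr
  have hxe : R - a = x + R * (1 - Real.cos ε) := by rw [hx]; ring
  have := le_abs_self x
  linarith

/-- the length-ratio estimate for a monotone polar graph inside a small
ball: if `r` is `C¹` and nondecreasing on `[β/2, β/2+ε]`, `r(β/2) = a`,
`0 < ε < arcsin(δ/a)`, and `(r(β/2+ε) cos ε - a)² + (r(β/2+ε) sin ε)² = δ²`, then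
`(1/δ)∫_{β/2}^{β/2+ε} √((r')² + r²) ≤ (r(β/2+ε) - a)/δ + ε r(β/2+ε)/δ ≤ 3/2`
for all sufficiently small `δ` (depending only on `a`). -/
theorem stmt_6 (a : ℝ) (ha : 0 < a) :
    ∃ δ₀ : ℝ, 0 < δ₀ ∧
      ∀ δ : ℝ, 0 < δ → δ < δ₀ →
      ∀ (β ε : ℝ) (r r' : ℝ → ℝ),
        (∀ s ∈ Icc (β / 2) (β / 2 + ε), HasDerivAt r (r' s) s) →
        ContinuousOn r' (Icc (β / 2) (β / 2 + ε)) →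
        MonotoneOn r (Icc (β / 2) (β / 2 + ε)) →
        r (β / 2) = a →
        0 < ε → ε < Real.arcsin (δ / a) →
        (r (β / 2 + ε) * Real.cos ε - a) ^ 2 + (r (β / 2 + ε) * Real.sin ε) ^ 2 = δ ^ 2 →
        (∫ s in (β / 2)..(β / 2 + ε), Real.sqrt ((r' s) ^ 2 + (r s) ^ 2)) / δ
            ≤ (r (β / 2 + ε) - a) / δ + ε * r (β / 2 + ε) / δ
        ∧ (r (β / 2 + ε) - a) / δ + ε * r (β / 2 + ε) / δ ≤ 3 / 2 := by
  refine ⟨a / 100, by positivity, ?_⟩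
  intro δ hδ hδ0 β ε r r' hderiv hcont hmono hra hε hεarc hconstr
  set b := β / 2 with hb
  have hba : b ≤ b + ε := by linarith
  have hbb : b < b + ε := by linarith
  set R := r (b + ε) with hR
  have haR : a ≤ R := by
    have := hmono ⟨le_refl b, hba⟩ ⟨hba, le_refl _⟩ hba
    rwa [hra] at this
  have hmain : R - a + ε * R ≤ 3 / 2 * δ :=
    arith_aux ha hδ hδ0 haR hε hεarc hconstr
  constructor
  · -- integral estimate
    have hrc : ContinuousOn r (Icc b (b + ε)) := fun s hs =>
      (hderiv s hs).continuousAt.continuousWithinAt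
    have hr'0 : ∀ s ∈ Icc b (b + ε), 0 ≤ r' s := deriv_nonneg_aux hbb hderiv hmono
    have hint1 : IntervalIntegrable (fun s => Real.sqrt ((r' s) ^ 2 + (r s) ^ 2))
        MeasureTheory.volume b (b + ε) := by
      apply ContinuousOn.intervalIntegrable
      rw [uIcc_of_le hba]
      exact Real.continuous_sqrt.comp_continuousOn ((hcont.pow 2).add (hrc.pow 2))
    have hint2 : IntervalIntegrable r' MeasureTheory.volume b (b + ε) := by
      apply ContinuousOn.intervalIntegrable
      rwa [uIcc_of_le hba]
    have hint3 : IntervalIntegrable (fun s => r' s + R) MeasureTheory.volume b (b + ε) := by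
      apply ContinuousOn.intervalIntegrable
      rw [uIcc_of_le hba]
      exact hcont.add continuousOn_const
    have hptwise : ∀ s ∈ Icc b (b + ε),
        Real.sqrt ((r' s) ^ 2 + (r s) ^ 2) ≤ r' s + R := by
      intro s hs
      have h0 : 0 ≤ r' s := hr'0 s hs
      have hrs : r s ≤ R := hmono hs ⟨hba, le_refl _⟩ hs.2
      have hrsa : a ≤ r s := by
        have := hmono ⟨le_refl b, hba⟩ hs hs.1
        rwa [hra] at this
      calc Real.sqrt ((r' s) ^ 2 + (r s) ^ 2)
          ≤ Real.sqrt ((r' s + r s) ^ 2) := by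
            apply Real.sqrt_le_sqrt; nlinarith
        _ = r' s + r s := Real.sqrt_sq (by linarith)
        _ ≤ r' s + R := by linarith
    have hmono_int : (∫ s in b..(b + ε), Real.sqrt ((r' s) ^ 2 + (r s) ^ 2))
        ≤ ∫ s in b..(b + ε), (r' s + R) :=
      intervalIntegral.integral_mono_on hba hint1 hint3 hptwise
    have hFTC : (∫ s in b..(b + ε), r' s) = R - a := by
      rw [intervalIntegral.integral_eq_sub_of_hasDerivAt
        (fun s hs => hderiv s (by rwa [uIcc_of_le hba] at hs)) hint2, hra]
    have hsplit : (∫ s in b..(b + ε), (r' s + R)) = (R - a) + ε * R := by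
      rw [intervalIntegral.integral_add hint2 intervalIntegrable_const, hFTC,
        intervalIntegral.integral_const]
      simp
    rw [← add_div]
    gcongr
    rw [hsplit] at hmono_int
    linarith
  · rw [← add_div, div_le_iff₀ hδ]
    linarith
end
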